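/- Let A₀, B₀, E₀ be finite-dimensional real vector spaces, D₀ = A₀ × B₀ × E₀*, and Ê₀ = (A₀* ⊗ B₀*) ⊕ E₀. Then the space of functions f: D₀ → ℝ that are linear with respect to both scalar multiplications κₜʰ(a,b,ε) = (a,tb,tε) and κₜᵛ(a,b,ε) = (ta,b,tε) — i.e. f(κₜʰ(d) ) = t f(d) and f(κₜᵛ(d)) = t f(d), together with additivity in each vector bundle structure — is linearly isomorphic to Ê₀, where (ω, e) ∈ Ê₀ corresponds to the function (a,b,ε) ↦ ω(a,b) + ε(e). -/
import Mathlib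


/- STATEMENT 17: For finite-dimensional real vector spaces `A₀, B₀, E₀` and
`D₀ = A₀ × B₀ × E₀*`, the space of double-linear functions `f : D₀ → ℝ` (linear
for both vector bundle structures, i.e. additive in each structure and homogeneous
for both scalar multiplications `κₜʰ(a,b,ε) = (a,tb,tε)`, `κₜᵛ(a,b,ε) = (ta,b,tε)`)
is linearly isomorphic to `Ê₀ = (A₀* ⊗ B₀*) ⊕ E₀`, via
`(ω, e) ↦ ((a,b,ε) ↦ ω(a,b) + ε(e))`. This is expressed by saying that this map
`Φ` is linear, injective, and has as range exactly the double-linear functions. -/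

open Module

theorem stmt17 (A B E : Type*)
    [AddCommGroup A] [Module ℝ A] [FiniteDimensional ℝ A]
    [AddCommGroup B] [Module ℝ B] [FiniteDimensional ℝ B]
    [AddCommGroup E] [Module ℝ E] [FiniteDimensional ℝ E]
    (Φ : ((A →ₗ[ℝ] B →ₗ[ℝ] ℝ) × E) → ((A × B × Dual ℝ E) → ℝ))
    (hΦ : ∀ (p : (A →ₗ[ℝ] B →ₗ[ℝ] ℝ) × E) (a : A) (b : B) (ε : Dual ℝ E),
      Φ p (a, b, ε) = p.1 a b + ε p.2) :
    -- Φ is linear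
    (∀ p q, Φ (p + q) = Φ p + Φ q) ∧
    (∀ (c : ℝ) p, Φ (c • p) = c • Φ p) ∧
    -- Φ is injective
    Function.Injective Φ ∧
    -- the range of Φ consists exactly of the double-linear functions
    (∀ f : (A × B × Dual ℝ E) → ℝ,
      ((∀ (t : ℝ) (a : A) (b : B) (ε : Dual ℝ E), f (a, t • b, t • ε) = t * f (a, b, ε)) ∧
       (∀ (t : ℝ) (a : A) (b : B) (ε : Dual ℝ E), f (t • a, b, t • ε) = t * f (a, b, ε)) ∧
       (∀ (a : A) (b₁ b₂ : B) (ε₁ ε₂ : Dual ℝ E),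
         f (a, b₁ + b₂, ε₁ + ε₂) = f (a, b₁, ε₁) + f (a, b₂, ε₂)) ∧
       (∀ (a₁ a₂ : A) (b : B) (ε₁ ε₂ : Dual ℝ E),
         f (a₁ + a₂, b, ε₁ + ε₂) = f (a₁, b, ε₁) + f (a₂, b, ε₂)))
      ↔ f ∈ Set.range Φ) := by
  refine ⟨?_, ?_, ?_, ?_⟩
  · intro p q
    funext d
    obtain ⟨a, b, ε⟩ := d
    simp [hΦ, Prod.add_def]
    ring
  · intro c p
    funext d
    obtain ⟨a, b, ε⟩ := d
    simp [hΦ, Prod.smul_def]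
    ring
  · intro p q h
    have key : ∀ (a : A) (b : B) (ε : Dual ℝ E), p.1 a b + ε p.2 = q.1 a b + ε q.2 := by
      intro a b ε
      rw [← hΦ, ← hΦ, h]
    have h1 : p.1 = q.1 := by
      ext a b
      have := key a b 0
      simpa using this
    have h2 : p.2 = q.2 := by
      have : ∀ ε : Dual ℝ E, ε (p.2 - q.2) = 0 := by
        intro ε
        have := key 0 0 ε
        simp at this
        simp [map_sub, this]
      have := (Module.forall_dual_apply_eq_zero_iff ℝ (p.2 - q.2)).mp this
      exact sub_eq_zero.mp this
    exact Prod.ext h1 h2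
  · intro f
    constructor
    · rintro ⟨hH, hV, hAh, hAv⟩
      -- zero lemmas
      have hz1 : ∀ a : A, f (a, 0, 0) = 0 := by
        intro a
        have := hH 0 a 0 0
        simpa using this
      have hz2 : ∀ b : B, f (0, b, 0) = 0 := by
        intro b
        have := hV 0 0 b 0
        simpa using this
      have hsplit : ∀ a b ε, f (a, b, ε) = f (a, b, 0) + f (0, 0, ε) := by
        intro a b ε
        have h1 : f (a, b, ε) = f (a, b, 0) + f (a, 0, ε) := by
          have := hAh a b 0 0 ε
          simpa using this
        have h2 : f (a, 0, ε) = f (a, 0, 0) + f (0, 0, ε) := by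
          have := hAv a 0 0 0 ε
          simpa using this
        rw [h1, h2, hz1, zero_add]
      set ω : A →ₗ[ℝ] B →ₗ[ℝ] ℝ := LinearMap.mk₂ ℝ (fun a b => f (a, b, 0))
        (by intro a₁ a₂ b; have := hAv a₁ a₂ b 0 0; simpa using this)
        (by intro t a b
            have := hV t a b 0
            simpa using this)
        (by intro a b₁ b₂; have := hAh a b₁ b₂ 0 0; simpa using this)
        (by intro t a b
            have := hH t a b 0
            simpa using this) with hω
      set h : Dual ℝ (Dual ℝ E) :=
        { toFun := fun ε => f (0, 0, ε)
          map_add' := by intro ε₁ ε₂; have := hAh 0 0 0 ε₁ ε₂; simpa using this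
          map_smul' := by intro t ε; have := hH t 0 0 ε; simpa using this } with hh
      refine ⟨(ω, (Module.evalEquiv ℝ E).symm h), ?_⟩
      funext d
      obtain ⟨a, b, ε⟩ := d
      rw [hΦ]
      simp only
      rw [Module.apply_evalEquiv_symm_apply]
      rw [hsplit a b ε]
      rfl
    · rintro ⟨p, rfl⟩
      refine ⟨?_, ?_, ?_, ?_⟩ <;> intros <;> simp [hΦ] <;> ring
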